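/- For x ∈ St(d,r), ξ ∈ T_x with ‖ξ‖_F ≤ 1, the polar retraction satisfies ‖Retr_x(ξ) − (x + ξ)‖_F ≤ ‖ξ‖_F². -/

import Mathlib

open Matrix BigOperators Finset

noncomputable def fnorm {d r : ℕ} (A : Matrix (Fin d) (Fin r) ℝ) : ℝ :=
  Real.sqrt (∑ i, ∑ j, (A i j) ^ 2)

def ip {d r : ℕ} (A B : Matrix (Fin d) (Fin r) ℝ) : ℝ :=
  ∑ i, ∑ j, A i j * B i j

open scoped ComplexOrder in
/-- The positive semidefinite square root of a positive semidefinite matrix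
(the definition `Matrix.PosSemidef.sqrt` of the older Mathlib, removed since). -/
noncomputable def Matrix.PosSemidef.sqrt {n 𝕜 : Type*} [Fintype n] [DecidableEq n] [RCLike 𝕜]
    {A : Matrix n n 𝕜} (hA : Matrix.PosSemidef A) : Matrix n n 𝕜 :=
  hA.1.eigenvectorUnitary.1 * diagonal ((↑) ∘ (√·) ∘ hA.1.eigenvalues) *
  (star hA.1.eigenvectorUnitary : Matrix n n 𝕜)

def Stiefel (d r : ℕ) : Set (Matrix (Fin d) (Fin r) ℝ) :=
  {x | xᵀ * x = 1}

/-! With `A = x + ξ`, tangency gives `AᵀA = 1 + ξᵀξ =: S`, and for `T = S^{1/2}` this turns the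
Gram matrix of `A T⁻¹ - A` into `(1 - T)²`. In terms of the eigenvalues `νᵢ ≥ 1` of `S` the claim
becomes `∑ (√νᵢ - 1)² ≤ (∑ (νᵢ - 1))²`, which follows from `0 ≤ √νᵢ - 1 ≤ νᵢ - 1`. -/

lemma fnorm_sq {d r : ℕ} (A : Matrix (Fin d) (Fin r) ℝ) : fnorm A ^ 2 = (Aᵀ * A).trace := by
  rw [fnorm, Real.sq_sqrt (by positivity), trace, Finset.sum_comm]
  simp only [Matrix.diag, mul_apply, transpose_apply, sq]

namespace Matrix

open scoped ComplexOrder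

variable {n 𝕜 : Type*} [Fintype n] [DecidableEq n] [RCLike 𝕜]

lemma IsHermitian.one_le_eigenvalues_one_add {B : Matrix n n 𝕜} (hB : B.PosSemidef)
    (hS : (1 + B).IsHermitian) (i : n) : 1 ≤ hS.eigenvalues i := by
  have h : hS.eigenvalues i ∈ spectrum ℝ (algebraMap ℝ (Matrix n n 𝕜) 1 + B) := by
    rw [map_one, hS.spectrum_real_eq_range_eigenvalues]
    exact ⟨i, rfl⟩
  rw [← spectrum.singleton_add_eq, hB.1.spectrum_real_eq_range_eigenvalues] at h
  obtain ⟨_, rfl, _, ⟨j, rfl⟩, hj⟩ := h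
  linarith [hB.eigenvalues_nonneg j]

namespace PosSemidef

variable {A : Matrix n n 𝕜} (hA : A.PosSemidef)

lemma sqrt_mul_self : hA.sqrt * hA.sqrt = A := by
  have hD : diagonal ((↑) ∘ (√·) ∘ hA.1.eigenvalues) * diagonal ((↑) ∘ (√·) ∘ hA.1.eigenvalues)
      = diagonal (RCLike.ofReal ∘ hA.1.eigenvalues : n → 𝕜) := by
    rw [diagonal_mul_diagonal]
    congr 1 with i
    simp [← RCLike.ofReal_mul, Real.mul_self_sqrt (hA.eigenvalues_nonneg i)]
  conv_rhs => rw [hA.1.spectral_theorem, Unitary.conjStarAlgAut_apply, ← hD]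
  simp only [sqrt, Matrix.mul_assoc]
  rw [← Matrix.mul_assoc (star _ : Matrix n n 𝕜), Unitary.coe_star_mul_self, Matrix.one_mul]

lemma posSemidef_sqrt : hA.sqrt.PosSemidef := by
  rw [sqrt, star_eq_conjTranspose]
  exact (posSemidef_diagonal_iff.mpr fun _ =>
    RCLike.ofReal_nonneg.mpr (Real.sqrt_nonneg _)).mul_mul_conjTranspose_same _

lemma trace_sqrt : hA.sqrt.trace = ∑ i, (√(hA.1.eigenvalues i) : 𝕜) := by
  rw [sqrt, trace_mul_cycle, Unitary.coe_star_mul_self, one_mul, trace_diagonal]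
  rfl

lemma isUnit_det_sqrt (hdet : IsUnit A.det) : IsUnit hA.sqrt.det := by
  rw [← hA.sqrt_mul_self, det_mul] at hdet
  exact isUnit_of_mul_isUnit_left hdet

lemma transpose_sqrt {A : Matrix n n ℝ} (hA : A.PosSemidef) : hA.sqrtᵀ = hA.sqrt := by
  rw [← conjTranspose_eq_transpose_of_trivial]
  exact hA.posSemidef_sqrt.isHermitian

lemma trace_one_sub_sqrt_sq {A : Matrix n n ℝ} (hA : A.PosSemidef) :
    ((1 - hA.sqrt) ^ 2).trace = ∑ i, (1 - √(hA.1.eigenvalues i)) ^ 2 := by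
  have hexpand : (1 - hA.sqrt) ^ 2 = 1 - 2 • hA.sqrt + hA.sqrt * hA.sqrt := by noncomm_ring
  have hsq : ∀ i, (1 - √(hA.1.eigenvalues i)) ^ 2
      = 1 - 2 * √(hA.1.eigenvalues i) + hA.1.eigenvalues i := fun i => by
    rw [sub_sq, Real.sq_sqrt (hA.eigenvalues_nonneg i)]; ring
  rw [hexpand, hA.sqrt_mul_self, trace_add, trace_sub, trace_smul, trace_one, hA.trace_sqrt,
    hA.1.trace_eq_sum_eigenvalues, Finset.sum_congr rfl fun i _ => hsq i, Finset.sum_add_distrib,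
    Finset.sum_sub_distrib, ← Finset.mul_sum]
  simp

end PosSemidef

lemma transpose_mul_self_mul_inv_sub_self {m R : Type*} [Fintype m] [CommRing R]
    {A : Matrix m n R} {T : Matrix n n R} (hA : Aᵀ * A = T * T) (hT : Tᵀ = T)
    (hdet : IsUnit T.det) : (A * T⁻¹ - A)ᵀ * (A * T⁻¹ - A) = (1 - T) ^ 2 := by
  have hleft : (T⁻¹ - 1) * T = 1 - T := by rw [Matrix.sub_mul, nonsing_inv_mul T hdet, one_mul]
  have hright : T * (T⁻¹ - 1) = 1 - T := by rw [Matrix.mul_sub, mul_nonsing_inv T hdet, mul_one]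
  have hfactor : A * T⁻¹ - A = A * (T⁻¹ - 1) := by rw [Matrix.mul_sub, Matrix.mul_one]
  calc (A * T⁻¹ - A)ᵀ * (A * T⁻¹ - A) = (T⁻¹ - 1) * (Aᵀ * A) * (T⁻¹ - 1) := by
        rw [hfactor, transpose_mul, transpose_sub, transpose_nonsing_inv, hT, transpose_one,
          Matrix.mul_assoc, Matrix.mul_assoc, Matrix.mul_assoc]
    _ = (1 - T) ^ 2 := by rw [hA, ← Matrix.mul_assoc, hleft, Matrix.mul_assoc, hright, sq]

end Matrix

lemma sum_sq_one_sub_sqrt_le {ι : Type*} (s : Finset ι) {ν : ι → ℝ} (hν : ∀ i ∈ s, 1 ≤ ν i) :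
    ∑ i ∈ s, (1 - √(ν i)) ^ 2 ≤ (∑ i ∈ s, (ν i - 1)) ^ 2 := calc
  ∑ i ∈ s, (1 - √(ν i)) ^ 2 ≤ ∑ i ∈ s, (ν i - 1) ^ 2 := Finset.sum_le_sum fun i hi => by
    have h1 : 1 ≤ √(ν i) := Real.one_le_sqrt.mpr (hν i hi)
    have h2 : √(ν i) ≤ ν i := Real.sqrt_le_self_iff.mpr (Or.inr (hν i hi))
    rw [← neg_sub, neg_sq]
    exact pow_le_pow_left₀ (by linarith) (by linarith) 2
  _ ≤ (∑ i ∈ s, (ν i - 1)) ^ 2 := sum_sq_le_sq_sum_of_nonneg fun i hi => by linarith [hν i hi]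

lemma transpose_mul_self_add_of_mem_Stiefel {d r : ℕ} {x ξ : Matrix (Fin d) (Fin r) ℝ}
    (hx : x ∈ Stiefel d r) (hξ : xᵀ * ξ + ξᵀ * x = 0) : (x + ξ)ᵀ * (x + ξ) = 1 + ξᵀ * ξ := by
  rw [transpose_add, Matrix.add_mul, Matrix.mul_add, Matrix.mul_add, hx.out, add_assoc,
    ← add_assoc (xᵀ * ξ), hξ, zero_add]

theorem stmt4_general {d r : ℕ} (x ξ : Matrix (Fin d) (Fin r) ℝ)
    (hx : x ∈ Stiefel d r) (hξ : xᵀ * ξ + ξᵀ * x = 0) :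
    fnorm ((x + ξ) *
        (Matrix.PosSemidef.sqrt (Matrix.PosSemidef.add Matrix.PosSemidef.one (Matrix.posSemidef_conjTranspose_mul_self ξ)))⁻¹
        - (x + ξ))
      ≤ fnorm ξ ^ 2 := by
  have hB := posSemidef_conjTranspose_mul_self ξ
  set hS := PosSemidef.one.add hB
  set ν := hS.1.eigenvalues
  have hgram : (x + ξ)ᵀ * (x + ξ) = hS.sqrt * hS.sqrt := by
    rw [hS.sqrt_mul_self, transpose_mul_self_add_of_mem_Stiefel hx hξ,
      conjTranspose_eq_transpose_of_trivial]
  have hdet : IsUnit hS.sqrt.det :=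
    hS.isUnit_det_sqrt (PosDef.one.add_posSemidef hB).det_pos.ne'.isUnit
  have hretr : fnorm ((x + ξ) * hS.sqrt⁻¹ - (x + ξ)) ^ 2 = ∑ i, (1 - √(ν i)) ^ 2 := by
    rw [fnorm_sq, transpose_mul_self_mul_inv_sub_self hgram hS.transpose_sqrt hdet,
      hS.trace_one_sub_sqrt_sq]
  have hξν : fnorm ξ ^ 2 = ∑ i, (ν i - 1) := by
    have htr : (1 + ξᴴ * ξ).trace = ∑ i, ν i := hS.1.trace_eq_sum_eigenvalues
    rw [Finset.sum_sub_distrib, ← htr, trace_add, trace_one, fnorm_sq]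
    simp
  refine le_of_pow_le_pow_left₀ two_ne_zero (sq_nonneg _) ?_
  rw [hretr, hξν]
  exact sum_sq_one_sub_sqrt_le _ fun i _ => hS.1.one_le_eigenvalues_one_add hB i

theorem stmt4 {d r : ℕ} (x ξ : Matrix (Fin d) (Fin r) ℝ)
    (hx : x ∈ Stiefel d r) (hξ : xᵀ * ξ + ξᵀ * x = 0)
    (hsmall : fnorm ξ ≤ 1) :
    fnorm ((x + ξ) *
        (Matrix.PosSemidef.sqrt (Matrix.PosSemidef.add Matrix.PosSemidef.one (Matrix.posSemidef_conjTranspose_mul_self ξ)))⁻¹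
        - (x + ξ))
      ≤ fnorm ξ ^ 2 :=
  stmt4_general x ξ hx hξ
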